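/- Let Σ₁ = Σ_{k=1}^r γ_k v_k v_k^T with orthonormal v_k and γ₁ ≥ … ≥ γ_r > 0. Let Π and \hat{Π} be orthogonal projections onto span(v₁,…,v_{j−1}) and onto span of another orthonormal family (of size j−1), and set Σ_j = (I−Π)Σ₁(I−Π), \hat{Σ}_j = (I−\hat{Π})Σ₁(I−\hat{Π}). Then ‖\hat{Σ}_j − Σ_j‖_F ≤ 2γ_j ‖Π − \hat{Π}‖_F + γ₁ ‖Π − \hat{Π}‖_F². -/

import Mathlib

open BigOperators Matrix
open scoped Classical

noncomputable def enorm {p : ℕ} (v : Fin p → ℝ) : ℝ := Real.sqrt (∑ i, (v i) ^ 2)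

noncomputable def fnorm {p : ℕ} (A : Matrix (Fin p) (Fin p) ℝ) : ℝ :=
  Real.sqrt (∑ i, ∑ j, (A i j) ^ 2)

def outer {p : ℕ} (u v : Fin p → ℝ) : Matrix (Fin p) (Fin p) ℝ :=
  Matrix.of fun i j => u i * v j

/-! With `E = Π - Π̂` we have `I - Π̂ = (I - Π) + E`, hence
`Σ̂_j - Σ_j = E Σ₁ (I - Π) + (I - Π) Σ₁ E + E Σ₁ E`.
Both `Σ₁ (I - Π)` and `(I - Π) Σ₁` equal `∑_{k ≥ j} γ_k v_k v_kᵀ`, and multiplying any matrix by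
`∑_k c_k v_k v_kᵀ` with orthonormal `v_k` and `|c_k| ≤ g` scales its Frobenius norm by at most `g`:
row by row this is Bessel's inequality. So the first two terms are bounded by `γ_j ‖E‖_F`, and
the third by `‖E‖_F ‖Σ₁ E‖_F ≤ γ₁ ‖E‖_F²`. -/

lemma norm_compress_sub_compress_le {R : Type*} [NormedRing R] {s p q : R} {a b : ℝ}
    (hcomm : Commute p s) (h₁ : ‖(p - q) * (s * (1 - p))‖ ≤ a * ‖p - q‖)
    (h₂ : ‖s * (1 - p) * (p - q)‖ ≤ a * ‖p - q‖) (h₃ : ‖s * (p - q)‖ ≤ b * ‖p - q‖) :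
    ‖(1 - q) * s * (1 - q) - (1 - p) * s * (1 - p)‖ ≤ 2 * a * ‖p - q‖ + b * ‖p - q‖ ^ 2 := by
  set e := p - q
  have hps : (1 - p) * s = s * (1 - p) := by rw [sub_mul, mul_sub, one_mul, mul_one, hcomm.eq]
  have hdecomp : (1 - q) * s * (1 - q) - (1 - p) * s * (1 - p) =
      e * (s * (1 - p)) + (1 - p) * s * e + e * (s * e) := by
    simp only [e]; noncomm_ring
  have hquad : ‖e * (s * e)‖ ≤ b * ‖e‖ ^ 2 := calc
    ‖e * (s * e)‖ ≤ ‖e‖ * ‖s * e‖ := norm_mul_le _ _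
    _ ≤ ‖e‖ * (b * ‖e‖) := by gcongr
    _ = b * ‖e‖ ^ 2 := by ring
  rw [hdecomp, hps]
  linarith [norm_add₃_le (a := e * (s * (1 - p))) (b := s * (1 - p) * e) (c := e * (s * e))]

attribute [local instance] Matrix.frobeniusNormedAddCommGroup

section Frobenius

variable {l m n : Type*} [Fintype l] [Fintype m] [Fintype n]

lemma frobenius_norm_sq_eq_sum_dotProduct (A : Matrix m n ℝ) :
    ‖A‖ ^ 2 = ∑ i, A i ⬝ᵥ A i := by
  rw [frobenius_norm_def, ← Real.sqrt_eq_rpow, Real.sq_sqrt (by positivity)]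
  simp [dotProduct, sq]

lemma frobenius_norm_mul_le_of_vecMul {B : Matrix m n ℝ} {g : ℝ} (hg : 0 ≤ g)
    (hB : ∀ x, (x ᵥ* B) ⬝ᵥ (x ᵥ* B) ≤ g ^ 2 * (x ⬝ᵥ x)) (A : Matrix l m ℝ) :
    ‖A * B‖ ≤ g * ‖A‖ := by
  refine le_of_sq_le_sq ?_ (by positivity)
  rw [mul_pow, frobenius_norm_sq_eq_sum_dotProduct, frobenius_norm_sq_eq_sum_dotProduct,
    Finset.mul_sum]
  exact Finset.sum_le_sum fun i _ => hB (A i)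

end Frobenius

lemma outer_eq_vecMulVec {p : ℕ} (u w : Fin p → ℝ) : outer u w = vecMulVec u w := rfl

lemma fnorm_eq_frobenius_norm {p : ℕ} (A : Matrix (Fin p) (Fin p) ℝ) : fnorm A = ‖A‖ := by
  rw [fnorm, frobenius_norm_def, ← Real.sqrt_eq_rpow]
  simp

section Orthonormal

variable {n ι : Type*} [Fintype ι] {v : ι → n → ℝ}

lemma dotProduct_self_sum_smul [Fintype n] [DecidableEq ι]
    (hv : ∀ k l, v k ⬝ᵥ v l = if k = l then 1 else 0) (a : ι → ℝ) :
    (∑ k, a k • v k) ⬝ᵥ (∑ k, a k • v k) = ∑ k, a k ^ 2 := by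
  simp [sum_dotProduct, dotProduct_sum, hv, sq]

lemma sum_sq_dotProduct_le_dotProduct_self [Fintype n] [DecidableEq ι]
    (hv : ∀ k l, v k ⬝ᵥ v l = if k = l then 1 else 0)
    (x : n → ℝ) : ∑ k, (x ⬝ᵥ v k) ^ 2 ≤ x ⬝ᵥ x := by
  set y := ∑ k, (x ⬝ᵥ v k) • v k
  have hxy : x ⬝ᵥ y = ∑ k, (x ⬝ᵥ v k) ^ 2 := by simp [y, dotProduct_sum, sq]
  have hyy : y ⬝ᵥ y = ∑ k, (x ⬝ᵥ v k) ^ 2 := dotProduct_self_sum_smul hv _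
  have := dotProduct_self_star_nonneg (x - y)
  simp only [star_trivial, sub_dotProduct, dotProduct_sub, dotProduct_comm y x, hxy, hyy] at this
  linarith

variable (v) in
def spectralSum (c : ι → ℝ) : Matrix n n ℝ := ∑ k, c k • vecMulVec (v k) (v k)

lemma spectralSum_sub (c d : ι → ℝ) :
    spectralSum v (c - d) = spectralSum v c - spectralSum v d := by
  simp [spectralSum, sub_smul]

lemma transpose_spectralSum (c : ι → ℝ) : (spectralSum v c)ᵀ = spectralSum v c := by
  simp [spectralSum, transpose_sum]

lemma spectralSum_mul_spectralSum [Fintype n] [DecidableEq ι]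
    (hv : ∀ k l, v k ⬝ᵥ v l = if k = l then 1 else 0)
    (c d : ι → ℝ) : spectralSum v c * spectralSum v d = spectralSum v (c * d) := by
  simp only [spectralSum, Finset.sum_mul, Finset.mul_sum, smul_mul_smul_comm,
    vecMulVec_mul_vecMulVec, vecMulVec_smul, smul_smul]
  simp [hv]

lemma commute_spectralSum [Fintype n] [DecidableEq ι]
    (hv : ∀ k l, v k ⬝ᵥ v l = if k = l then 1 else 0) (c d : ι → ℝ) :
    Commute (spectralSum v c) (spectralSum v d) := by
  rw [Commute, SemiconjBy, spectralSum_mul_spectralSum hv, spectralSum_mul_spectralSum hv, mul_comm]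

lemma vecMul_spectralSum [Fintype n] (c : ι → ℝ) (x : n → ℝ) :
    x ᵥ* spectralSum v c = ∑ k, (c k * (x ⬝ᵥ v k)) • v k := by
  simp [spectralSum, vecMul_sum, vecMul_smul, vecMul_vecMulVec, mul_smul]

lemma frobenius_norm_mul_spectralSum_le [Fintype n] [DecidableEq ι]
    (hv : ∀ k l, v k ⬝ᵥ v l = if k = l then 1 else 0)
    {c : ι → ℝ} {g : ℝ} (hg : 0 ≤ g) (hc : ∀ k, |c k| ≤ g) {m : Type*} [Fintype m]
    (A : Matrix m n ℝ) : ‖A * spectralSum v c‖ ≤ g * ‖A‖ := by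
  refine frobenius_norm_mul_le_of_vecMul hg (fun x => ?_) A
  rw [vecMul_spectralSum, dotProduct_self_sum_smul hv]
  calc ∑ k, (c k * (x ⬝ᵥ v k)) ^ 2 ≤ ∑ k, g ^ 2 * (x ⬝ᵥ v k) ^ 2 := by
        gcongr with k
        rw [mul_pow]
        exact mul_le_mul_of_nonneg_right (sq_le_sq' (abs_le.mp (hc k)).1 (abs_le.mp (hc k)).2)
          (sq_nonneg _)
    _ ≤ g ^ 2 * (x ⬝ᵥ x) := by
        rw [← Finset.mul_sum]
        gcongr
        exact sum_sq_dotProduct_le_dotProduct_self hv x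

lemma frobenius_norm_spectralSum_mul_le [Fintype n] [DecidableEq ι]
    (hv : ∀ k l, v k ⬝ᵥ v l = if k = l then 1 else 0)
    {c : ι → ℝ} {g : ℝ} (hg : 0 ≤ g) (hc : ∀ k, |c k| ≤ g) {m : Type*} [Fintype m]
    (A : Matrix n m ℝ) : ‖spectralSum v c * A‖ ≤ g * ‖A‖ := by
  rw [← frobenius_norm_transpose, transpose_mul, transpose_spectralSum, ← frobenius_norm_transpose A]
  exact frobenius_norm_mul_spectralSum_le hv hg hc Aᵀ

end Orthonormal

theorem stmt9 {p r : ℕ} (γ : Fin r → ℝ) (v : Fin r → Fin p → ℝ)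
    (hortho : ∀ k l, v k ⬝ᵥ v l = if k = l then (1 : ℝ) else 0)
    (hmono : Antitone γ) (hpos : ∀ k, 0 < γ k)
    (S : Matrix (Fin p) (Fin p) ℝ) (hS : S = ∑ k, γ k • outer (v k) (v k))
    (j : ℕ) (hj1 : 1 ≤ j) (hjr : j ≤ r)
    (Pm : Matrix (Fin p) (Fin p) ℝ)
    (hP : Pm = ∑ k ∈ Finset.univ.filter (fun k : Fin r => (k : ℕ) < j - 1), outer (v k) (v k))
    (Q : Matrix (Fin p) (Fin p) ℝ) :
    fnorm (((1 : Matrix (Fin p) (Fin p) ℝ) - Q) * S * ((1 : Matrix (Fin p) (Fin p) ℝ) - Q) -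
        ((1 : Matrix (Fin p) (Fin p) ℝ) - Pm) * S * ((1 : Matrix (Fin p) (Fin p) ℝ) - Pm)) ≤
      2 * γ ⟨j - 1, by omega⟩ * fnorm (Pm - Q) + γ ⟨0, by omega⟩ * (fnorm (Pm - Q)) ^ 2 := by
  set head : Fin r → ℝ := fun k => if (k : ℕ) < j - 1 then 1 else 0
  replace hS : S = spectralSum v γ := by simp only [hS, spectralSum, outer_eq_vecMulVec]
  replace hP : Pm = spectralSum v head := by
    simp only [hP, Finset.sum_filter, spectralSum, head, ite_smul, one_smul, zero_smul,
      outer_eq_vecMulVec]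
  have hSP : S * (1 - Pm) = spectralSum v (γ * (1 - head)) := by
    rw [hS, hP, mul_sub, mul_one, spectralSum_mul_spectralSum hortho, ← spectralSum_sub, mul_sub,
      mul_one]
  have htail_le : ∀ k, |(γ * (1 - head)) k| ≤ γ ⟨j - 1, by omega⟩ := by
    intro k
    by_cases hk : (k : ℕ) < j - 1
    · simp [head, hk, (hpos _).le]
    · simpa [head, hk, abs_of_pos (hpos k)] using hmono (Fin.le_def.mpr (by simp; omega))
  have hle_first : ∀ k, |γ k| ≤ γ ⟨0, by omega⟩ := fun k =>
    (abs_of_pos (hpos k)).trans_le (hmono (Fin.le_def.mpr (Nat.zero_le _)))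
  simp only [fnorm_eq_frobenius_norm]
  let _ : NormedRing (Matrix (Fin p) (Fin p) ℝ) := Matrix.frobeniusNormedRing
  have hcomm : Commute Pm S := by rw [hS, hP]; exact commute_spectralSum hortho _ _
  refine norm_compress_sub_compress_le hcomm ?_ ?_ ?_
  · rw [hSP]; exact frobenius_norm_mul_spectralSum_le hortho (hpos _).le htail_le _
  · rw [hSP]; exact frobenius_norm_spectralSum_mul_le hortho (hpos _).le htail_le _
  · rw [hS]; exact frobenius_norm_spectralSum_mul_le hortho (hpos _).le hle_first _
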